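/- arXiv:2004.14697 — 4 statements merged into one kernel-verified Lean document; each statement's English description precedes it below -/
import Mathlib

section
/- Let P ⊆ ℝ^n be a compact convex set with nonempty interior and u : int P → ℝ a smooth function whose Hessian matrix is positive definite at every point of int P. Set V = (det Hess u)^{-1/2} on int P (so V > 0 on int P), and suppose V extends to a continuous function on P vanishing at every point of ∂P. If at every critical point x of V in int P the ordinary Hessian matrix of log V at x is negative definite, then V has exactly one critical point in int P. -/
open Real Set Topology Filter Matrix

/-- `i`-th partial derivative of a function on `ℝⁿ`. -/
noncomputable def pd {n : ℕ} (i : Fin n) (f : (Fin n → ℝ) → ℝ) : (Fin n → ℝ) → ℝ :=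
  fun x => fderiv ℝ f x (Pi.single i 1)

/-- Hessian matrix of a function on `ℝⁿ`. -/
noncomputable def Hess {n : ℕ} (u : (Fin n → ℝ) → ℝ) (x : Fin n → ℝ) :
    Matrix (Fin n) (Fin n) ℝ :=
  Matrix.of fun i j => pd i (pd j u) x

/-- The orbital volume function `V = (det Hess u)^(-1/2)`. -/
noncomputable def orbVol {n : ℕ} (u : (Fin n → ℝ) → ℝ) : (Fin n → ℝ) → ℝ :=
  fun x => (Hess u x).det ^ (-(1/2 : ℝ))

/-!
Existence: `V` is continuous on the compact set `P`, positive inside and zero on `∂P`, so it attains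
its maximum at an interior point, which is critical.

Uniqueness is a mountain-pass argument. Since `V > 0`, `log V` has the same critical points as `V`,
so every critical point is a nondegenerate, hence strict, local maximum of `V`. Suppose `a ≠ b` are
two of them and let `c` be the supremum of the levels `t > 0` at which `a` and `b` lie in one
connected component of the compact superlevel set `{V ≥ t}`. A decreasing intersection of continua
is a continuum, so the supremum is attained by a component `K`. A strict local maximum at level `c`
would be isolated in `K`, so `V a, V b > c` and `K` has no critical point at level `c`. Near a
regular point, moving in a direction of ascent puts every nearby point of `{V ≥ c}` in the closure
of a connected subset of `{V > c}`; as `K` is connected, it lies in the closure of the component of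
`{V > c}` containing `a`. Hence `b` is in that component, and a path from `a` to `b` inside it links
them at a level above `c`, contradicting the choice of `c`.
-/

section Topology

variable {X : Type*} [TopologicalSpace X]

def IsStrictLocalMax (f : X → ℝ) (x : X) : Prop :=
  ∀ᶠ y in 𝓝[≠] x, f y < f x

def LinkedAbove (Ω : Set X) (f : X → ℝ) (t : ℝ) (a b : X) : Prop :=
  b ∈ connectedComponentIn {x ∈ Ω | t ≤ f x} a

theorem LinkedAbove.mem_left {Ω : Set X} {f : X → ℝ} {t : ℝ} {a b : X}
    (h : LinkedAbove Ω f t a b) : a ∈ {x ∈ Ω | t ≤ f x} :=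
  connectedComponentIn_nonempty_iff.1 ⟨b, h⟩

theorem LinkedAbove.mono {Ω Ω' : Set X} {f : X → ℝ} {t : ℝ} {a b : X}
    (h : LinkedAbove Ω f t a b) (hΩ : Ω ⊆ Ω') : LinkedAbove Ω' f t a b :=
  connectedComponentIn_mono a (fun _ hx => ⟨hΩ hx.1, hx.2⟩ :
    {x ∈ Ω | t ≤ f x} ⊆ {x ∈ Ω' | t ≤ f x}) h

theorem IsClosed.connectedComponentIn {F : Set X} (hF : IsClosed F) (x : X) :
    IsClosed (connectedComponentIn F x) := by
  by_cases hx : x ∈ F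
  · exact closure_subset_iff_isClosed.1 <|
      isPreconnected_connectedComponentIn.closure.subset_connectedComponentIn
        (subset_closure (mem_connectedComponentIn hx))
        (closure_minimal (connectedComponentIn_subset F x) hF)
  · rw [connectedComponentIn_eq_empty hx]
    exact isClosed_empty

theorem IsOpen.mem_connectedComponentIn_of_mem_closure [LocallyConnectedSpace X] {U : Set X}
    (hU : IsOpen U) {a x : X} (hx : x ∈ closure (connectedComponentIn U a)) (hxU : x ∈ U) :
    x ∈ connectedComponentIn U a := by
  obtain ⟨y, hyx, hya⟩ := mem_closure_iff_nhds.1 hx _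
    (hU.connectedComponentIn.mem_nhds (mem_connectedComponentIn hxU))
  rw [connectedComponentIn_eq hya, ← connectedComponentIn_eq hyx]
  exact mem_connectedComponentIn hxU

theorem IsPreconnected.subset_of_forall_eventually {K C : Set X} (hK : IsPreconnected K)
    (hC : IsClosed C) (hKC : (K ∩ C).Nonempty)
    (hloc : ∀ x ∈ K ∩ C, ∀ᶠ y in 𝓝 x, y ∈ K → y ∈ C) : K ⊆ C := by
  intro z hzK
  by_contra hzC
  have hcover : K ⊆ interior (Kᶜ ∪ C) ∪ Cᶜ := by
    intro y hyK
    by_cases hyC : y ∈ C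
    · refine Or.inl (mem_interior_iff_mem_nhds.2 ((hloc y ⟨hyK, hyC⟩).mono fun y' hy' => ?_))
      by_cases h : y' ∈ K
      exacts [Or.inr (hy' h), Or.inl h]
    · exact Or.inr hyC
  obtain ⟨x, hxK, hxC⟩ := hKC
  obtain ⟨y, hyK, hyint, hyC⟩ := hK _ _ isOpen_interior hC.isOpen_compl hcover
    ⟨x, hxK, (hcover hxK).resolve_right (not_not.2 hxC)⟩ ⟨z, hzK, hzC⟩
  exact hyC ((interior_subset hyint).resolve_left (not_not.2 hyK))

theorem IsPreconnected.subset_singleton_of_isStrictLocalMax [T1Space X] {K : Set X}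
    {f : X → ℝ} {z : X} (hK : IsPreconnected K) (hzK : z ∈ K) (hge : ∀ y ∈ K, f z ≤ f y)
    (hz : IsStrictLocalMax f z) : K ⊆ {z} := by
  refine hK.subset_of_forall_eventually isClosed_singleton ⟨z, hzK, rfl⟩ ?_
  rintro x ⟨-, rfl⟩
  filter_upwards [eventually_nhdsWithin_iff.1 hz] with y hy hyK
  by_contra hyx
  exact (hy hyx).not_ge (hge y hyK)

theorem isPreconnected_iInter_of_directed [T2Space X] {ι : Type*} [Nonempty ι]
    {V : ι → Set X} (hV : Directed (· ⊇ ·) V) (hcpt : ∀ i, IsCompact (V i))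
    (hconn : ∀ i, IsPreconnected (V i)) : IsPreconnected (⋂ i, V i) := by
  set C := ⋂ i, V i
  obtain ⟨i₀⟩ := ‹Nonempty ι›
  have hC : IsCompact C := (hcpt i₀).of_isClosed_subset (isClosed_iInter fun i => (hcpt i).isClosed)
    (iInter_subset V i₀)
  rw [isPreconnected_iff_subset_of_disjoint_closed]
  intro u v hu hv hCuv huv
  obtain ⟨O₁, O₂, hO₁, hO₂, hCuO₁, hCvO₂, hO⟩ := SeparatedNhds.of_isCompact_isCompact
    (hC.inter_right hu) (hC.inter_right hv) (by
      rw [Set.disjoint_iff_inter_eq_empty, ← huv]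
      ext; simp only [mem_inter_iff]; tauto)
  obtain ⟨i, hi⟩ := exists_subset_nhds_of_isCompact hV hcpt (U := O₁ ∪ O₂) fun x hx =>
    (hO₁.union hO₂).mem_nhds ((hCuv hx).imp (fun h => hCuO₁ ⟨hx, h⟩) fun h => hCvO₂ ⟨hx, h⟩)
  have hCi : C ⊆ V i := iInter_subset V i
  rcases (hconn i).subset_or_subset hO₁ hO₂ hO hi with h | h
  · exact Or.inl fun x hx => (hCuv hx).resolve_right fun hxv =>
      Set.disjoint_left.1 hO (h (hCi hx)) (hCvO₂ ⟨hx, hxv⟩)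
  · exact Or.inr fun x hx => (hCuv hx).resolve_left fun hxu =>
      Set.disjoint_left.1 hO (hCuO₁ ⟨hx, hxu⟩) (h (hCi hx))

theorem LinkedAbove.csSup [T2Space X] {Ω : Set X} {f : X → ℝ} {a b : X} {τ : ℝ}
    (hcpt : ∀ t, τ < t → IsCompact {x ∈ Ω | t ≤ f x}) {S : Set ℝ} (hS : S.Nonempty)
    (hSτ : ∀ t ∈ S, τ < t ∧ LinkedAbove Ω f t a b) : LinkedAbove Ω f (sSup S) a b := by
  have : Nonempty S := hS.to_subtype
  set V : S → Set X := fun t => connectedComponentIn {x ∈ Ω | (t : ℝ) ≤ f x} a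
  have hVcpt : ∀ t : S, IsCompact (V t) := fun t =>
    (hcpt t (hSτ t t.2).1).of_isClosed_subset
      ((hcpt t (hSτ t t.2).1).isClosed.connectedComponentIn a) (connectedComponentIn_subset _ _)
  have hVdir : Directed (· ⊇ ·) V := Antitone.directed_ge fun s t hst =>
    connectedComponentIn_mono a fun x hx => ⟨hx.1, le_trans hst hx.2⟩
  have hsub : (⋂ t, V t) ⊆ {x ∈ Ω | sSup S ≤ f x} := fun x hx => by
    have hxt : ∀ t : S, x ∈ {x ∈ Ω | (t : ℝ) ≤ f x} := fun t =>
      connectedComponentIn_subset _ _ (mem_iInter.1 hx t)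
    exact ⟨(hxt ⟨_, hS.some_mem⟩).1, csSup_le hS fun t ht => (hxt ⟨t, ht⟩).2⟩
  exact (isPreconnected_iInter_of_directed hVdir hVcpt fun _ => isPreconnected_connectedComponentIn)
    |>.subset_connectedComponentIn
      (mem_iInter.2 fun t => mem_connectedComponentIn (hSτ t t.2).2.mem_left) hsub
      (mem_iInter.2 fun t => (hSτ t t.2).2)

end Topology

section Superlevel

variable {E : Type*} [NormedAddCommGroup E] [NormedSpace ℝ E] {f : E → ℝ}

theorem IsOpen.exists_linkedAbove {W : Set E} (hW : IsOpen W) (hWc : IsPreconnected W)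
    (hf : ContinuousOn f W) {a b : E} (ha : a ∈ W) (hb : b ∈ W) :
    ∃ x ∈ W, LinkedAbove W f (f x) a b := by
  obtain ⟨γ, hγ⟩ := (hW.isConnected_iff_isPathConnected.1 ⟨⟨a, ha⟩, hWc⟩).joinedIn a ha b hb
  have hγW : range γ ⊆ W := range_subset_iff.2 hγ
  obtain ⟨x, hx, hmin⟩ :=
    (isCompact_range γ.continuous).exists_isMinOn (range_nonempty γ) (hf.mono hγW)
  exact ⟨x, hγW hx, (isConnected_range γ.continuous).isPreconnected.subset_connectedComponentIn
    ⟨0, γ.source⟩ (fun y hy => (⟨hγW hy, hmin hy⟩ : y ∈ {z ∈ W | f x ≤ f z})) ⟨1, γ.target⟩⟩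

theorem HasStrictFDerivAt.exists_le_add_smul {f' : E →L[ℝ] ℝ} {w v : E}
    (hf : HasStrictFDerivAt f f' w) (hv : 0 < f' v) :
    ∃ ρ > 0, ∀ y ∈ Metric.ball w ρ, ∀ s : ℝ, 0 ≤ s → y + s • v ∈ Metric.ball w ρ →
      f y + s * (f' v / 2) ≤ f (y + s • v) := by
  have hv0 : 0 < ‖v‖ := norm_pos_iff.2 (by rintro rfl; simp at hv)
  obtain ⟨ρ, hρ, hball⟩ :=
    Metric.eventually_nhds_iff_ball.1 (hf.isLittleO.bound (by positivity : 0 < f' v / (2 * ‖v‖)))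
  refine ⟨ρ, hρ, fun y hy s hs hys => ?_⟩
  have hbound := hball (y + s • v, y) (by
    simpa only [Metric.mem_ball, Prod.dist_eq, max_lt_iff] using ⟨hys, hy⟩)
  simp only [add_sub_cancel_left, map_smul, smul_eq_mul, norm_smul, Real.norm_eq_abs,
    abs_of_nonneg hs] at hbound
  have hε : f' v / (2 * ‖v‖) * (s * ‖v‖) = s * (f' v / 2) := by field_simp
  linarith [neg_abs_le (f (y + s • v) - f y - s * f' v)]

theorem HasStrictFDerivAt.exists_uniform_ascent {f' : E →L[ℝ] ℝ} {w v : E}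
    (hf : HasStrictFDerivAt f f' w) (hv : 0 < f' v) {N : Set E} (hN : N ∈ 𝓝 w) :
    ∃ r > 0, ∃ s₁ > 0, ∀ y ∈ Metric.ball w r, f w - s₁ * (f' v / 2) < f y ∧
      ∀ s ∈ Icc 0 s₁, y + s • v ∈ N ∧ f y + s * (f' v / 2) ≤ f (y + s • v) := by
  obtain ⟨ρ₁, hρ₁, hpush⟩ := hf.exists_le_add_smul hv
  obtain ⟨ρ₂, hρ₂, hρ₂N⟩ := Metric.mem_nhds_iff.1 hN
  set ρ := min ρ₁ ρ₂
  have hρ : 0 < ρ := lt_min hρ₁ hρ₂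
  have hv0 : 0 < ‖v‖ := norm_pos_iff.2 (by rintro rfl; simp at hv)
  set s₁ := ρ / (2 * ‖v‖)
  have hs₁ : 0 < s₁ := by positivity
  obtain ⟨r₁, hr₁, hr₁f⟩ := Metric.eventually_nhds_iff_ball.1 (hf.continuousAt.eventually
    (lt_mem_nhds (by nlinarith [mul_pos hs₁ hv] : f w - s₁ * (f' v / 2) < f w)))
  refine ⟨min r₁ (ρ / 2), by positivity, s₁, hs₁, fun y hy =>
    ⟨hr₁f y (Metric.ball_subset_ball (min_le_left _ _) hy), fun s hs => ?_⟩⟩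
  have hyρ : y ∈ Metric.ball w ρ :=
    Metric.ball_subset_ball ((min_le_right _ _).trans (half_le_self hρ.le)) hy
  have hys : y + s • v ∈ Metric.ball w ρ := by
    have : ‖s • v‖ ≤ ρ / 2 := by
      rw [norm_smul, Real.norm_eq_abs, abs_of_nonneg hs.1]
      calc s * ‖v‖ ≤ s₁ * ‖v‖ := by gcongr; exact hs.2
        _ = ρ / 2 := by simp only [s₁]; field_simp
    calc dist (y + s • v) w ≤ dist y w + ‖s • v‖ := by
          rw [dist_eq_norm, dist_eq_norm, add_sub_right_comm]; exact norm_add_le _ _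
      _ < min r₁ (ρ / 2) + ρ / 2 := add_lt_add_of_lt_of_le hy this
      _ ≤ ρ := by linarith [min_le_right r₁ (ρ / 2)]
  exact ⟨hρ₂N (Metric.ball_subset_ball (min_le_right _ _) hys),
    hpush y (Metric.ball_subset_ball (min_le_left _ _) hyρ) s hs.1
      (Metric.ball_subset_ball (min_le_left _ _) hys)⟩

theorem HasStrictFDerivAt.exists_isPreconnected_superlevel {f' : E →L[ℝ] ℝ} {w : E}
    (hf : HasStrictFDerivAt f f' w) (hf' : f' ≠ 0) {N : Set E} (hN : N ∈ 𝓝 w) :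
    ∃ S ⊆ N ∩ {x | f w < f x}, IsPreconnected S ∧ ∀ᶠ x in 𝓝 w, f w ≤ f x → x ∈ closure S := by
  obtain ⟨v, hv⟩ : ∃ v, 0 < f' v := by
    obtain ⟨v, hv⟩ := DFunLike.ne_iff.1 hf'
    rcases (show f' v ≠ 0 from hv).lt_or_gt with h | h
    exacts [⟨-v, by simpa using h⟩, ⟨v, h⟩]
  have hδ : 0 < f' v / 2 := half_pos hv
  obtain ⟨r, hr, s₁, hs₁, hascent⟩ := hf.exists_uniform_ascent hv hN
  -- `S` is made of the ascending segments from the points of `M` and the translate `B`,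
  -- which links their far ends
  set M := {y ∈ Metric.ball w r | f w ≤ f y}
  set L : E → Set E := fun y => (fun s : ℝ => y + s • v) '' Ioc 0 s₁
  set B := (fun y => y + s₁ • v) '' Metric.ball w r
  refine ⟨⋃₀ ((fun y => L y ∪ B) '' M), ?_, ?_, ?_⟩
  · rintro _ ⟨_, ⟨y, hyM, rfl⟩, ⟨s, hs, rfl⟩ | ⟨x, hx, rfl⟩⟩
    · obtain ⟨hN', hgain⟩ := (hascent y hyM.1).2 s ⟨hs.1.le, hs.2⟩
      exact ⟨hN', show f w < _ by linarith [hyM.2, mul_pos hs.1 hδ]⟩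
    · obtain ⟨hlow, hup⟩ := hascent x hx
      obtain ⟨hN', hgain⟩ := hup s₁ ⟨hs₁.le, le_rfl⟩
      exact ⟨hN', show f w < _ by linarith⟩
  · refine isPreconnected_sUnion (w + s₁ • v) _ ?_ ?_
    · rintro _ ⟨y, -, rfl⟩
      exact Or.inr ⟨w, Metric.mem_ball_self hr, rfl⟩
    · rintro _ ⟨y, hy, rfl⟩
      exact (isPreconnected_Ioc.image _ (by fun_prop)).union (y + s₁ • v)
        ⟨s₁, ⟨hs₁, le_rfl⟩, rfl⟩ ⟨y, hy.1, rfl⟩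
        ((convex_ball w r).isPreconnected.image _ (by fun_prop))
  · filter_upwards [Metric.ball_mem_nhds w hr] with y hy hfy
    have hyL : y ∈ closure (L y) := by
      have h0 : (0 : ℝ) ∈ closure (Ioc 0 s₁) := by
        rw [closure_Ioc hs₁.ne]; exact ⟨le_rfl, hs₁.le⟩
      simpa using image_closure_subset_closure_image (f := fun s : ℝ => y + s • v) (by fun_prop)
        (mem_image_of_mem _ h0)
    have hyM : y ∈ M := ⟨hy, hfy⟩
    exact closure_mono
      (subset_union_left.trans (subset_sUnion_of_mem (mem_image_of_mem (fun y => L y ∪ B) hyM)))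
      hyL

theorem subset_closure_connectedComponentIn_superlevel {Ω K : Set E} {a : E} {c : ℝ}
    (hΩ : IsOpen Ω) (hf : ContDiffOn ℝ 1 f Ω) (hK : IsPreconnected K)
    (hKΩ : K ⊆ {x ∈ Ω | c ≤ f x}) (haK : a ∈ K) (hca : c < f a)
    (hreg : ∀ w ∈ K, f w = c → fderiv ℝ f w ≠ 0) :
    K ⊆ closure (connectedComponentIn {x ∈ Ω | c < f x} a) := by
  set U := {x ∈ Ω | c < f x}
  have hU : IsOpen U := hf.continuousOn.isOpen_inter_preimage hΩ isOpen_Ioi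
  set A := connectedComponentIn U a
  have hA : IsOpen A := hU.connectedComponentIn
  refine hK.subset_of_forall_eventually isClosed_closure
    ⟨a, haK, subset_closure (mem_connectedComponentIn ⟨(hKΩ haK).1, hca⟩)⟩ ?_
  rintro w ⟨hwK, hwA⟩
  obtain ⟨hwΩ, hcw⟩ := hKΩ hwK
  rcases hcw.lt_or_eq with hcw | hcw
  · filter_upwards [hA.mem_nhds (hU.mem_connectedComponentIn_of_mem_closure hwA ⟨hwΩ, hcw⟩)]
      with y hy _ using subset_closure hy
  have hfw : HasStrictFDerivAt f (fderiv ℝ f w) w :=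
    ((hf w hwΩ).contDiffAt (hΩ.mem_nhds hwΩ)).hasStrictFDerivAt one_ne_zero
  obtain ⟨S, hSU, hS, hSw⟩ :=
    hfw.exists_isPreconnected_superlevel (hreg w hwK hcw.symm) (hΩ.mem_nhds hwΩ)
  rw [← hcw] at hSU hSw
  obtain ⟨x, hxA, hxS⟩ := ((mem_closure_iff_frequently.1 hwA).and_eventually hSw).exists
  obtain ⟨y, hyA, hyS⟩ := mem_closure_iff.1
    (hxS (connectedComponentIn_subset U a hxA).2.le) A hA hxA
  have hSA : S ⊆ A := by
    have : S ⊆ connectedComponentIn U y := hS.subset_connectedComponentIn hyS hSU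
    rwa [← connectedComponentIn_eq hyA] at this
  filter_upwards [hSw] with z hz hzK using closure_mono hSA (hz (hKΩ hzK).2)

theorem eq_of_isStrictLocalMax_of_isCompact_superlevel {Ω : Set E} {τ : ℝ} (hΩ : IsOpen Ω)
    (hΩc : IsPreconnected Ω) (hf : ContDiffOn ℝ 1 f Ω) (hτ : ∀ x ∈ Ω, τ < f x)
    (hcpt : ∀ t, τ < t → IsCompact {x ∈ Ω | t ≤ f x})
    (hcrit : ∀ x ∈ Ω, fderiv ℝ f x = 0 → IsStrictLocalMax f x) {a b : E} (ha : a ∈ Ω)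
    (hb : b ∈ Ω) (hfa : IsStrictLocalMax f a) (hfb : IsStrictLocalMax f b) : a = b := by
  by_contra hab
  set T := {t | τ < t ∧ LinkedAbove Ω f t a b}
  have hT : T.Nonempty := by
    obtain ⟨x, hx, hlink⟩ := hΩ.exists_linkedAbove hΩc hf.continuousOn ha hb
    exact ⟨f x, hτ x hx, hlink⟩
  have hTbdd : BddAbove T := ⟨f a, fun t ht => ht.2.mem_left.2⟩
  set c := sSup T
  have hτc : τ < c := hT.some_mem.1.trans_le (le_csSup hTbdd hT.some_mem)
  set K := connectedComponentIn {x ∈ Ω | c ≤ f x} a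
  have hbK : b ∈ K := LinkedAbove.csSup hcpt hT fun _ ht => ht
  have haK : a ∈ K := mem_connectedComponentIn (LinkedAbove.mem_left hbK)
  have hK : IsPreconnected K := isPreconnected_connectedComponentIn
  have hKΩ : K ⊆ {x ∈ Ω | c ≤ f x} := connectedComponentIn_subset _ _
  have hlevel : ∀ z ∈ K, f z ≤ c → ¬IsStrictLocalMax f z := fun z hz hzc hmax => by
    have hKz := hK.subset_singleton_of_isStrictLocalMax hz (fun y hy => hzc.trans (hKΩ hy).2) hmax
    exact hab ((hKz haK).trans (hKz hbK).symm)
  have hca : c < f a := lt_of_not_ge fun h => hlevel a haK h hfa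
  have hcb : c < f b := lt_of_not_ge fun h => hlevel b hbK h hfb
  have hKA := subset_closure_connectedComponentIn_superlevel hΩ hf hK hKΩ haK hca
    fun w hw hwc hw' => hlevel w hw hwc.le (hcrit w (hKΩ hw).1 hw')
  set U := {x ∈ Ω | c < f x}
  have hU : IsOpen U := hf.continuousOn.isOpen_inter_preimage hΩ isOpen_Ioi
  have hUΩ : U ⊆ Ω := fun x hx => hx.1
  -- `a` and `b` are joined inside `U`, hence linked at a level above `c`
  obtain ⟨x, hxA, hlink⟩ := hU.connectedComponentIn.exists_linkedAbove
    isPreconnected_connectedComponentIn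
    (hf.continuousOn.mono ((connectedComponentIn_subset U a).trans hUΩ))
    (mem_connectedComponentIn ⟨ha, hca⟩)
    (hU.mem_connectedComponentIn_of_mem_closure (hKA hbK) ⟨hb, hcb⟩)
  have hcx : c < f x := (connectedComponentIn_subset U a hxA).2
  exact (le_csSup hTbdd ⟨hτc.trans hcx,
    hlink.mono ((connectedComponentIn_subset U a).trans hUΩ)⟩).not_gt hcx

end Superlevel

theorem lt_of_fderiv_apply_neg_of_segment {E : Type*} [NormedAddCommGroup E] [NormedSpace ℝ E]
    {g : E → ℝ} {z y : E} (hdiff : ∀ t ∈ Icc (0 : ℝ) 1, DifferentiableAt ℝ g (z + t • (y - z)))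
    (hneg : ∀ t ∈ Ioo (0 : ℝ) 1, fderiv ℝ g (z + t • (y - z)) (y - z) < 0) : g y < g z := by
  have hderiv : ∀ t ∈ Icc (0 : ℝ) 1, HasDerivAt (fun s => g (z + s • (y - z)))
      (fderiv ℝ g (z + t • (y - z)) (y - z)) t := fun t ht =>
    (hdiff t ht).hasFDerivAt.comp_hasDerivAt t
      (((hasDerivAt_id t).smul_const (y - z)).const_add z |>.congr_deriv (by simp))
  obtain ⟨t, ht, hslope⟩ := exists_hasDerivAt_eq_slope (fun s => g (z + s • (y - z)))
    (fun t => fderiv ℝ g (z + t • (y - z)) (y - z)) one_pos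
    (fun t ht => (hderiv t ht).continuousAt.continuousWithinAt)
    (fun t ht => hderiv t (Ioo_subset_Icc_self ht))
  have := hneg t ht
  simp only [one_smul, zero_smul, add_zero, add_sub_cancel, sub_zero, div_one] at hslope
  linarith

section SecondDerivativeTest

variable {E : Type*} [NormedAddCommGroup E] [NormedSpace ℝ E] [FiniteDimensional ℝ E]

theorem exists_pos_forall_le_neg_mul_norm_sq {B : E →L[ℝ] E →L[ℝ] ℝ}
    (hB : ∀ v ≠ 0, B v v < 0) : ∃ m > 0, ∀ v, B v v ≤ -(m * ‖v‖ ^ 2) := by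
  obtain ⟨m, hm, hmin⟩ := (isCompact_sphere (0 : E) 1).exists_forall_le'
    (f := fun v => -B v v) (by fun_prop) (a := 0)
    fun v hv => neg_pos.2 (hB v (ne_zero_of_mem_unit_sphere ⟨v, hv⟩))
  refine ⟨m, hm, fun v => ?_⟩
  rcases eq_or_ne v 0 with rfl | hv
  · simp
  have hn : 0 < ‖v‖ := norm_pos_iff.2 hv
  have := hmin (‖v‖⁻¹ • v) (by simp [norm_smul, hn.ne'])
  simp only [map_smul, _root_.smul_apply, smul_eq_mul] at this
  have hscale : ‖v‖ ^ 2 * (‖v‖⁻¹ * (‖v‖⁻¹ * B v v)) = B v v := by field_simp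
  nlinarith [pow_pos hn 2]

theorem isStrictLocalMax_of_fderiv_eq_zero {g : E → ℝ} {z : E} (hg : ContDiffAt ℝ 2 g z)
    (hcrit : fderiv ℝ g z = 0) (hneg : ∀ v ≠ 0, fderiv ℝ (fderiv ℝ g) z v v < 0) :
    IsStrictLocalMax g z := by
  set B := fderiv ℝ (fderiv ℝ g) z
  obtain ⟨m, hm, hB⟩ := exists_pos_forall_le_neg_mul_norm_sq hneg
  have hdiff : ∀ᶠ x in 𝓝 z, DifferentiableAt ℝ g x :=
    (hg.eventually (by simp)).mono fun x hx => hx.differentiableAt two_ne_zero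
  have hD : HasFDerivAt (fderiv ℝ g) B z :=
    ((hg.fderiv_right (m := 1) le_rfl).differentiableAt one_ne_zero).hasFDerivAt
  obtain ⟨ρ, hρ, hball⟩ :=
    Metric.eventually_nhds_iff_ball.1 (hdiff.and (hD.isLittleO.bound (half_pos hm)))
  filter_upwards [self_mem_nhdsWithin, mem_nhdsWithin_of_mem_nhds (Metric.ball_mem_nhds z hρ)]
    with y hyz hy
  set v := y - z
  have hv : 0 < ‖v‖ := norm_pos_iff.2 (sub_ne_zero.2 hyz)
  have hline : ∀ t ∈ Icc (0 : ℝ) 1, z + t • v ∈ Metric.ball z ρ := fun t ht =>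
    (convex_ball z ρ).add_smul_sub_mem (Metric.mem_ball_self hρ) hy ht
  refine lt_of_fderiv_apply_neg_of_segment (fun t ht => (hball _ (hline t ht)).1) fun t ht => ?_
  have hbound := (hball _ (hline t (Ioo_subset_Icc_self ht))).2
  simp only [hcrit, sub_zero, add_sub_cancel_left, norm_smul, Real.norm_eq_abs,
    abs_of_pos ht.1] at hbound
  have hsplit : fderiv ℝ g (z + t • v) v
      = (fderiv ℝ g (z + t • v) - B (t • v)) v + t * B v v := by
    simp [map_smul]
  have hle := (le_abs_self ((fderiv ℝ g (z + t • v) - B (t • v)) v)).trans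
    (((fderiv ℝ g (z + t • v) - B (t • v)).le_opNorm v).trans
      (mul_le_mul_of_nonneg_right hbound (norm_nonneg v)))
  nlinarith [mul_le_mul_of_nonneg_left (hB v) ht.1.le, mul_pos ht.1 (mul_pos hm (pow_pos hv 2))]

end SecondDerivativeTest

section OrbitVolume

variable {n : ℕ} {s : Set (Fin n → ℝ)}

theorem contDiffOn_pd {f : (Fin n → ℝ) → ℝ} (hs : IsOpen s) (hf : ContDiffOn ℝ (⊤ : ℕ∞) f s)
    (j : Fin n) : ContDiffOn ℝ (⊤ : ℕ∞) (pd j f) s :=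
  (ContinuousLinearMap.apply ℝ ℝ (Pi.single j 1 : Fin n → ℝ)).contDiff.comp_contDiffOn
    (hf.fderiv_of_isOpen hs (by simp))

theorem contDiffOn_det_Hess {u : (Fin n → ℝ) → ℝ} (hs : IsOpen s)
    (hu : ContDiffOn ℝ (⊤ : ℕ∞) u s) : ContDiffOn ℝ (⊤ : ℕ∞) (fun x => (Hess u x).det) s := by
  have hH : ∀ i j, ContDiffOn ℝ (⊤ : ℕ∞) (fun x => Hess u x i j) s := fun i j =>
    contDiffOn_pd hs (contDiffOn_pd hs hu j) i
  simp only [Matrix.det_apply, Units.smul_def]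
  exact ContDiffOn.sum fun σ _ => (contDiffOn_prod fun i _ => hH (σ i) i).const_smul _

theorem orbVol_pos {u : (Fin n → ℝ) → ℝ} {x : Fin n → ℝ} (h : (Hess u x).PosDef) :
    0 < orbVol u x :=
  rpow_pos_of_pos h.det_pos _

theorem contDiffOn_orbVol {u : (Fin n → ℝ) → ℝ} (hs : IsOpen s) (hu : ContDiffOn ℝ (⊤ : ℕ∞) u s)
    (hpos : ∀ x ∈ s, (Hess u x).PosDef) : ContDiffOn ℝ (⊤ : ℕ∞) (orbVol u) s := fun x hx =>
  (((contDiffOn_det_Hess hs hu).contDiffAt (hs.mem_nhds hx)).rpow_const_of_ne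
    (hpos x hx).det_pos.ne').contDiffWithinAt

theorem dotProduct_Hess_mulVec {g : (Fin n → ℝ) → ℝ} {x : Fin n → ℝ}
    (hg : DifferentiableAt ℝ (fderiv ℝ g) x) (v : Fin n → ℝ) :
    v ⬝ᵥ (Hess g x *ᵥ v) = fderiv ℝ (fderiv ℝ g) x v v := by
  have hH : Hess g x = LinearMap.toMatrix₂' ℝ ((ContinuousLinearMap.coeLM ℝ).comp
      (fderiv ℝ (fderiv ℝ g) x : (Fin n → ℝ) →ₗ[ℝ] (Fin n → ℝ) →L[ℝ] ℝ)) := by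
    ext i j
    change fderiv ℝ (fun y => fderiv ℝ g y (Pi.single j 1)) x (Pi.single i 1) = _
    rw [fderiv_clm_apply hg (differentiableAt_const _)]
    simp
  rw [hH, ← Matrix.toLinearMap₂'_apply', Matrix.toLinearMap₂'_toMatrix']
  rfl

theorem isStrictLocalMax_of_posDef_neg_Hess {g : (Fin n → ℝ) → ℝ} {z : Fin n → ℝ}
    (hg : ContDiffAt ℝ 2 g z) (hcrit : fderiv ℝ g z = 0) (hneg : (-Hess g z).PosDef) :
    IsStrictLocalMax g z := by
  refine isStrictLocalMax_of_fderiv_eq_zero hg hcrit fun v hv => ?_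
  have := (Matrix.posDef_iff_dotProduct_mulVec.1 hneg).2 hv
  rw [← dotProduct_Hess_mulVec ((hg.fderiv_right (m := 1) le_rfl).differentiableAt one_ne_zero)]
  simpa [Matrix.neg_mulVec] using this

theorem isStrictLocalMax_orbVol {u : (Fin n → ℝ) → ℝ} (hs : IsOpen s)
    (hu : ContDiffOn ℝ (⊤ : ℕ∞) u s) (hpos : ∀ x ∈ s, (Hess u x).PosDef) {z : Fin n → ℝ}
    (hz : z ∈ s) (hcrit : fderiv ℝ (orbVol u) z = 0)
    (hneg : (-Hess (fun y => log (orbVol u y)) z).PosDef) : IsStrictLocalMax (orbVol u) z := by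
  have hV : ContDiffAt ℝ (⊤ : ℕ∞) (orbVol u) z :=
    (contDiffOn_orbVol hs hu hpos).contDiffAt (hs.mem_nhds hz)
  have hVz : 0 < orbVol u z := orbVol_pos (hpos z hz)
  have hlog : ContDiffAt ℝ 2 (fun y => log (orbVol u y)) z :=
    ((contDiffAt_log.2 hVz.ne').comp z hV).of_le (by norm_cast)
  have hlogcrit : fderiv ℝ (fun y => log (orbVol u y)) z = 0 := by
    have := (hasDerivAt_log hVz.ne').comp_hasFDerivAt z (hV.differentiableAt (by simp)).hasFDerivAt
    rw [hcrit, smul_zero] at this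
    exact this.fderiv
  filter_upwards [isStrictLocalMax_of_posDef_neg_Hess hlog hlogcrit hneg,
    nhdsWithin_le_nhds (hs.mem_nhds hz)] with y hy hys
  exact (log_lt_log_iff (orbVol_pos (hpos y hys)) hVz).1 hy

end OrbitVolume

section Boundary

variable {X : Type*} [TopologicalSpace X] {P : Set X} {g V : X → ℝ}

theorem mem_interior_of_ne_zero (hg0 : ∀ x ∈ frontier P, g x = 0) {x : X} (hx : x ∈ P)
    (hgx : g x ≠ 0) : x ∈ interior P :=
  by_contra fun h => hgx (hg0 x ⟨subset_closure hx, h⟩)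

theorem IsCompact.isCompact_superlevel_interior [T2Space X] (hP : IsCompact P)
    (hg : ContinuousOn g P) (hgV : EqOn g V (interior P)) (hg0 : ∀ x ∈ frontier P, g x = 0)
    {t : ℝ} (ht : 0 < t) : IsCompact {x ∈ interior P | t ≤ V x} := by
  convert hP.of_isClosed_subset (hg.preimage_isClosed_of_isClosed hP.isClosed isClosed_Ici)
    inter_subset_left using 1
  ext x
  constructor
  · rintro ⟨hx, hxt⟩
    exact ⟨interior_subset hx, show t ≤ g x by rwa [hgV hx]⟩
  · rintro ⟨hx, hxt : t ≤ g x⟩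
    have hxint := mem_interior_of_ne_zero hg0 hx (ht.trans_le hxt).ne'
    exact ⟨hxint, by rwa [← hgV hxint]⟩

theorem IsCompact.exists_isLocalMax_interior (hP : IsCompact P) (hPint : (interior P).Nonempty)
    (hg : ContinuousOn g P) (hgV : EqOn g V (interior P)) (hg0 : ∀ x ∈ frontier P, g x = 0)
    (hV : ∀ x ∈ interior P, 0 < V x) : ∃ x ∈ interior P, IsLocalMax V x := by
  obtain ⟨x₀, hx₀, hx₀max⟩ := hP.exists_isMaxOn (hPint.mono interior_subset) hg
  obtain ⟨y, hy⟩ := hPint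
  have hyx₀ : g y ≤ g x₀ := hx₀max (interior_subset hy)
  have hx₀int : x₀ ∈ interior P :=
    mem_interior_of_ne_zero hg0 hx₀ (by linarith [hgV hy, hV y hy] : 0 < g x₀).ne'
  refine ⟨x₀, hx₀int, ?_⟩
  filter_upwards [isOpen_interior.mem_nhds hx₀int] with y hy
  rw [← hgV hy, ← hgV hx₀int]
  exact hx₀max (interior_subset hy)

end Boundary

theorem stmt1 (n : ℕ) (P : Set (Fin n → ℝ)) (hP : IsCompact P) (hPconv : Convex ℝ P)
    (hPint : (interior P).Nonempty)
    (u Vbar : (Fin n → ℝ) → ℝ)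
    (hu : ContDiffOn ℝ (⊤ : ℕ∞) u (interior P))
    (hpos : ∀ x ∈ interior P, (Hess u x).PosDef)
    (hVc : ContinuousOn Vbar P)
    (hVagree : ∀ x ∈ interior P, Vbar x = orbVol u x)
    (hVbd : ∀ x ∈ frontier P, Vbar x = 0)
    (hneg : ∀ x ∈ interior P, fderiv ℝ (orbVol u) x = 0 →
      (-(Hess (fun y => Real.log (orbVol u y)) x)).PosDef) :
    ∃! x, x ∈ interior P ∧ fderiv ℝ (orbVol u) x = 0 := by
  have hVpos : ∀ x ∈ interior P, 0 < orbVol u x := fun x hx => orbVol_pos (hpos x hx)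
  have hmax : ∀ x ∈ interior P, fderiv ℝ (orbVol u) x = 0 → IsStrictLocalMax (orbVol u) x :=
    fun x hx hcrit => isStrictLocalMax_orbVol isOpen_interior hu hpos hx hcrit (hneg x hx hcrit)
  obtain ⟨x₀, hx₀, hx₀max⟩ := hP.exists_isLocalMax_interior hPint hVc hVagree hVbd hVpos
  have hcrit₀ : fderiv ℝ (orbVol u) x₀ = 0 := hx₀max.fderiv_eq_zero
  refine ⟨x₀, ⟨hx₀, hcrit₀⟩, fun x ⟨hx, hcrit⟩ => ?_⟩
  exact eq_of_isStrictLocalMax_of_isCompact_superlevel isOpen_interior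
    hPconv.interior.isPreconnected ((contDiffOn_orbVol isOpen_interior hu hpos).of_le (by simp))
    hVpos (fun t ht => hP.isCompact_superlevel_interior hVc hVagree hVbd ht)
    hmax hx hx₀ (hmax x hx hcrit) (hmax x₀ hx₀ hcrit₀)
end

section
/- Let Ω ⊆ ℝ^n be open and u : Ω → ℝ a smooth function whose Hessian matrix H(x) = (∂²u/∂x^i∂x^j(x)) is positive definite at every point of Ω; write (u^{ij}) for the entries of H^{-1} and V = (det H)^{-1/2}. Then for every j, k ∈ {1,…,n} and every x ∈ Ω one has −(1/2) ∑_{l=1}^n ∂²u^{jl}/∂x^l∂x^k (x) = −∂/∂x^k ( ∑_{l=1}^n u^{jl} ∂(log V)/∂x^l )(x). -/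
/-!
Write `G = H⁻¹`. Jacobi's formula gives `∂_l log V = -½ tr (G ∂_l H)`, and differentiating
`G H = 1` gives `∂_l G = -G (∂_l H) G`. Since `H` is a Hessian, `∂_l H_cd = ∂_c H_ld` (third
derivatives of `u` commute), which turns `∑_l ∂_l G_jl` into `-∑_c G_jc tr (G ∂_c H)`. Hence
`∑_l G_jl ∂_l log V = ½ ∑_l ∂_l G_jl` on all of `Ω`, and differentiating this identity in `x^k`
gives the claim.
-/

open Real Set Topology Filter Matrix

open scoped ContDiff

section PartialDerivatives

variable {n : ℕ} {f g : (Fin n → ℝ) → ℝ} {x : Fin n → ℝ}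

lemma Filter.EventuallyEq.pd_eq (h : f =ᶠ[𝓝 x] g) (i : Fin n) : pd i f x = pd i g x := by
  simp only [pd, h.fderiv_eq]

lemma pd_const_mul (hf : DifferentiableAt ℝ f x) (c : ℝ) (i : Fin n) :
    pd i (fun y => c * f y) x = c * pd i f x := by
  simp [pd, fderiv_const_mul hf c]

lemma pd_mul (hf : DifferentiableAt ℝ f x) (hg : DifferentiableAt ℝ g x) (i : Fin n) :
    pd i (fun y => f y * g y) x = pd i f x * g x + f x * pd i g x := by
  simp only [pd, fderiv_fun_mul hf hg, _root_.add_apply, _root_.smul_apply, smul_eq_mul]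
  ring

lemma pd_sum {ι : Type*} {s : Finset ι} {F : ι → (Fin n → ℝ) → ℝ}
    (h : ∀ a ∈ s, DifferentiableAt ℝ (F a) x) (i : Fin n) :
    pd i (fun y => ∑ a ∈ s, F a y) x = ∑ a ∈ s, pd i (F a) x := by
  simp only [pd, fderiv_fun_sum h, _root_.sum_apply]

lemma pd_log (hf : DifferentiableAt ℝ f x) (hfx : f x ≠ 0) (i : Fin n) :
    pd i (fun y => Real.log (f y)) x = (f x)⁻¹ * pd i f x := by
  simp [pd, (hf.hasFDerivAt.log hfx).fderiv]

lemma ContDiffOn.pd {s : Set (Fin n → ℝ)} (hs : IsOpen s) (hf : ContDiffOn ℝ ∞ f s)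
    (i : Fin n) : ContDiffOn ℝ ∞ (pd i f) s :=
  (ContinuousLinearMap.apply ℝ ℝ (Pi.single i 1)).contDiff.comp_contDiffOn
    (hf.fderiv_of_isOpen hs le_rfl)

lemma pd_comm (hf : ContDiffAt ℝ 2 f x) (a b : Fin n) :
    pd a (pd b f) x = pd b (pd a f) x := by
  have hdf : DifferentiableAt ℝ (fderiv ℝ f) x :=
    (hf.fderiv_right (m := 1) le_rfl).differentiableAt one_ne_zero
  have hpd : ∀ c d : Fin n,
      pd c (pd d f) x = fderiv ℝ (fderiv ℝ f) x (Pi.single c 1) (Pi.single d 1) := by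
    intro c d
    change fderiv ℝ (fun y => fderiv ℝ f y (Pi.single d 1)) x (Pi.single c 1) = _
    simp [fderiv_clm_apply hdf (differentiableAt_const _)]
  rw [hpd, hpd]
  exact (hf.isSymmSndFDerivAt (by simp [minSmoothness_of_isRCLikeNormedField])).eq _ _

end PartialDerivatives

namespace Matrix

variable {𝕜 : Type*} [NontriviallyNormedField 𝕜] {ι : Type*} [Fintype ι] [DecidableEq ι]

noncomputable def detRowContinuousMultilinear :
    ContinuousMultilinearMap 𝕜 (fun _ : ι => ι → 𝕜) 𝕜 :=
  { (detRowAlternating : (ι → 𝕜) [⋀^ι]→ₗ[𝕜] 𝕜).toMultilinearMap with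
    cont := continuous_id.matrix_det }

lemma contDiff_det {k : WithTop ℕ∞} : ContDiff 𝕜 k fun A : ι → ι → 𝕜 => (of A).det :=
  (detRowContinuousMultilinear (𝕜 := 𝕜) (ι := ι)).contDiff

lemma contDiffAt_inv_apply {k : WithTop ℕ∞} {A : ι → ι → 𝕜} (hA : (of A).det ≠ 0) (a b : ι) :
    ContDiffAt 𝕜 k (fun B : ι → ι → 𝕜 => (of B)⁻¹ a b) A := by
  have hadjugate : ∀ B : ι → ι → 𝕜,
      (of B)⁻¹ a b = ((of B).det)⁻¹ * (of (Function.update B b (Pi.single a 1))).det := by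
    intro B
    rw [inv_def, smul_apply, Ring.inverse_eq_inv', smul_eq_mul, adjugate_apply]
    rfl
  have hrow : ContDiff 𝕜 k fun B : ι → ι → 𝕜 => Function.update B b (Pi.single a 1) := by
    refine contDiff_pi.2 fun i => ?_
    rcases eq_or_ne i b with rfl | h
    · simpa using contDiff_const
    · simpa [Function.update_of_ne h] using contDiff_apply 𝕜 (ι → 𝕜) i
  have hdet : ContDiff 𝕜 k fun B : ι → ι → 𝕜 => (of B).det := contDiff_det
  simp only [hadjugate]
  exact (hdet.contDiffAt.inv hA).mul (hdet.comp hrow).contDiffAt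

end Matrix

section MatrixValuedFunctions

variable {𝕜 : Type*} [NontriviallyNormedField 𝕜] {ι : Type*} [Fintype ι] [DecidableEq ι]
  {E : Type*} [NormedAddCommGroup E] [NormedSpace 𝕜 E] {M : E → Matrix ι ι 𝕜} {x : E}

lemma DifferentiableAt.matrix_det (hM : ∀ a b, DifferentiableAt 𝕜 (fun y => M y a b) x) :
    DifferentiableAt 𝕜 (fun y => (M y).det) x :=
  ((contDiff_det (k := 1)).differentiable one_ne_zero _).comp x
    (differentiableAt_pi.2 fun a => differentiableAt_pi.2 (hM a))

lemma DifferentiableAt.matrix_inv_apply (hM : ∀ a b, DifferentiableAt 𝕜 (fun y => M y a b) x)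
    (hdet : (M x).det ≠ 0) (a b : ι) : DifferentiableAt 𝕜 (fun y => (M y)⁻¹ a b) x :=
  ((contDiffAt_inv_apply (k := 1) hdet a b).differentiableAt one_ne_zero).comp x
    (differentiableAt_pi.2 fun a => differentiableAt_pi.2 (hM a))

lemma ContDiffOn.matrix_inv_apply {s : Set E} {k : WithTop ℕ∞}
    (hM : ∀ a b, ContDiffOn 𝕜 k (fun y => M y a b) s) (hdet : ∀ y ∈ s, (M y).det ≠ 0)
    (a b : ι) : ContDiffOn 𝕜 k (fun y => (M y)⁻¹ a b) s := fun y hy =>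
  (contDiffAt_inv_apply (hdet y hy) a b).comp_contDiffWithinAt y
    (contDiffWithinAt_pi.2 fun a => contDiffWithinAt_pi.2 fun b => hM a b y hy)

end MatrixValuedFunctions

section MatrixPartialDerivatives

variable {n : ℕ} {ι : Type*} [Fintype ι] {x : Fin n → ℝ}

noncomputable def pdMatrix (l : Fin n) (M : (Fin n → ℝ) → Matrix ι ι ℝ) (x : Fin n → ℝ) :
    Matrix ι ι ℝ :=
  of fun a b => pd l (fun y => M y a b) x

variable {M N : (Fin n → ℝ) → Matrix ι ι ℝ}

lemma pdMatrix_mul (hM : ∀ a b, DifferentiableAt ℝ (fun y => M y a b) x)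
    (hN : ∀ a b, DifferentiableAt ℝ (fun y => N y a b) x) (l : Fin n) :
    pdMatrix l (fun y => M y * N y) x = pdMatrix l M x * N x + M x * pdMatrix l N x := by
  ext a b
  simp only [pdMatrix, of_apply, Matrix.add_apply, mul_apply]
  rw [pd_sum (F := fun c y => M y a c * N y c b) fun c _ => (hM a c).mul (hN c b)]
  simp only [pd_mul (hM _ _) (hN _ _), Finset.sum_add_distrib]

variable [DecidableEq ι]

lemma pdMatrix_inv (hM : ∀ a b, DifferentiableAt ℝ (fun y => M y a b) x)
    (hdet : (M x).det ≠ 0) (l : Fin n) :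
    pdMatrix l (fun y => (M y)⁻¹) x = -((M x)⁻¹ * pdMatrix l M x * (M x)⁻¹) := by
  have hconst : (fun y => (M y)⁻¹ * M y) =ᶠ[𝓝 x] fun _ => 1 :=
    ((DifferentiableAt.matrix_det hM).continuousAt.eventually_ne hdet).mono
      fun y hy => nonsing_inv_mul _ hy.isUnit
  have hzero : pdMatrix l (fun y => (M y)⁻¹ * M y) x = 0 := by
    ext a b
    have hentry : (fun y => ((M y)⁻¹ * M y) a b) =ᶠ[𝓝 x] fun _ => (1 : Matrix ι ι ℝ) a b :=
      hconst.mono fun y hy => congrFun (congrFun hy a) b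
    simp only [pdMatrix, of_apply, hentry.pd_eq]
    simp [pd]
  rw [pdMatrix_mul (DifferentiableAt.matrix_inv_apply hM hdet) hM] at hzero
  calc pdMatrix l (fun y => (M y)⁻¹) x
      = pdMatrix l (fun y => (M y)⁻¹) x * M x * (M x)⁻¹ := by
        rw [mul_assoc, mul_nonsing_inv _ hdet.isUnit, mul_one]
    _ = -((M x)⁻¹ * pdMatrix l M x * (M x)⁻¹) := by
        rw [eq_neg_of_add_eq_zero_left hzero, neg_mul]

lemma pd_det (hM : ∀ a b, DifferentiableAt ℝ (fun y => M y a b) x) (l : Fin n) :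
    pd l (fun y => (M y).det) x = trace (adjugate (M x) * pdMatrix l M x) := by
  have hrows : ∀ i, HasFDerivAt (fun y => fun c => M y i c)
      (ContinuousLinearMap.pi fun c => fderiv ℝ (fun y => M y i c) x) x :=
    fun i => hasFDerivAt_pi.2 fun c => (hM i c).hasFDerivAt
  have hJ := HasFDerivAt.multilinear_comp (detRowContinuousMultilinear (𝕜 := ℝ) (ι := ι)) hrows
  have hcramer : ∀ (A : Matrix ι ι ℝ) i (v : ι → ℝ),
      (A.updateRow i v).det = ∑ c, A.adjugate c i * v c := fun A i v => by
    rw [← cramer_transpose_apply, cramer_eq_adjugate_mulVec, ← adjugate_transpose]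
    rfl
  change fderiv ℝ (fun y => detRowContinuousMultilinear fun i c => M y i c) x _ = _
  rw [hJ.fderiv, _root_.sum_apply, trace_mul_comm]
  refine Finset.sum_congr rfl fun i _ => ?_
  exact (hcramer (M x) i _).trans (Finset.sum_congr rfl fun c _ => mul_comm _ _)

lemma pd_log_det (hM : ∀ a b, DifferentiableAt ℝ (fun y => M y a b) x) (hdet : (M x).det ≠ 0)
    (l : Fin n) : pd l (fun y => Real.log (M y).det) x = trace ((M x)⁻¹ * pdMatrix l M x) := by
  rw [pd_log (DifferentiableAt.matrix_det hM) hdet, pd_det hM, inv_def, Ring.inverse_eq_inv',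
    smul_mul_assoc, trace_smul, smul_eq_mul]

lemma sum_inv_mul_pd_log_det {M : (Fin n → ℝ) → Matrix (Fin n) (Fin n) ℝ}
    (hM : ∀ a b, DifferentiableAt ℝ (fun y => M y a b) x) (hdet : (M x).det ≠ 0)
    (hsymm : ∀ l c d, pdMatrix l M x c d = pdMatrix c M x l d) (j : Fin n) :
    ∑ l, (M x)⁻¹ j l * pd l (fun y => Real.log (M y).det) x
      = -∑ l, pd l (fun y => (M y)⁻¹ j l) x := by
  have hinv : ∀ l, pd l (fun y => (M y)⁻¹ j l) x
      = -((M x)⁻¹ * pdMatrix l M x * (M x)⁻¹) j l := fun l =>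
    congrFun (congrFun (pdMatrix_inv hM hdet l) j) l
  have hswap : ∑ l, ((M x)⁻¹ * pdMatrix l M x * (M x)⁻¹) j l
      = ∑ c, (M x)⁻¹ j c * trace (pdMatrix c M x * (M x)⁻¹) := by
    calc ∑ l, ((M x)⁻¹ * pdMatrix l M x * (M x)⁻¹) j l
        = ∑ l, ∑ c, (M x)⁻¹ j c * (pdMatrix c M x * (M x)⁻¹) l l := by
          simp only [Matrix.mul_assoc, mul_apply (M := (M x)⁻¹) (i := j)]
          refine Finset.sum_congr rfl fun l _ => Finset.sum_congr rfl fun c _ => ?_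
          simp only [mul_apply, hsymm l c]
      _ = ∑ c, (M x)⁻¹ j c * trace (pdMatrix c M x * (M x)⁻¹) := by
          rw [Finset.sum_comm]
          simp only [trace, diag, Finset.mul_sum]
  simp only [pd_log_det hM hdet, hinv, Finset.sum_neg_distrib, neg_neg, hswap,
    trace_mul_comm (M x)⁻¹]

end MatrixPartialDerivatives

section SymplecticPotential

variable {n : ℕ} {Ω : Set (Fin n → ℝ)} {u : (Fin n → ℝ) → ℝ} {x : Fin n → ℝ}

lemma ContDiffOn.hess_apply (hΩ : IsOpen Ω) (hu : ContDiffOn ℝ ∞ u Ω) (a b : Fin n) :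
    ContDiffOn ℝ ∞ (fun y => Hess u y a b) Ω :=
  (hu.pd hΩ b).pd hΩ a

lemma pdMatrix_hess_comm (hΩ : IsOpen Ω) (hu : ContDiffOn ℝ ∞ u Ω) (hx : x ∈ Ω) (l c d : Fin n) :
    pdMatrix l (Hess u) x c d = pdMatrix c (Hess u) x l d :=
  pd_comm (((hu.pd hΩ d).contDiffAt (hΩ.mem_nhds hx)).of_le (WithTop.coe_le_coe.2 le_top)) l c

lemma sum_inv_hess_mul_pd_log_orbVol (hΩ : IsOpen Ω) (hu : ContDiffOn ℝ ∞ u Ω)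
    (hpos : ∀ y ∈ Ω, (Hess u y).PosDef) (hx : x ∈ Ω) (j : Fin n) :
    ∑ l, (Hess u x)⁻¹ j l * pd l (fun z => Real.log (orbVol u z)) x
      = (1/2 : ℝ) * ∑ l, pd l (fun y => (Hess u y)⁻¹ j l) x := by
  have hHess : ∀ a b, DifferentiableAt ℝ (fun y => Hess u y a b) x := fun a b =>
    ((hu.hess_apply hΩ a b).contDiffAt (hΩ.mem_nhds hx)).differentiableAt (by simp)
  have hdet : (Hess u x).det ≠ 0 := (hpos x hx).det_pos.ne'
  have hlogV : (fun z => Real.log (orbVol u z)) =ᶠ[𝓝 x]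
      fun z => -(1/2 : ℝ) * Real.log (Hess u z).det :=
    eventually_of_mem (hΩ.mem_nhds hx) fun z hz => by
      dsimp only [orbVol]
      rw [Real.log_rpow (hpos z hz).det_pos]
  have hlogdet : DifferentiableAt ℝ (fun z => Real.log (Hess u z).det) x :=
    (DifferentiableAt.matrix_det hHess).log hdet
  simp only [hlogV.pd_eq, pd_const_mul hlogdet, mul_left_comm _ (-(1/2 : ℝ)), ← Finset.mul_sum,
    sum_inv_mul_pd_log_det hHess hdet (pdMatrix_hess_comm hΩ hu hx)]
  ring

end SymplecticPotential

theorem stmt2 (n : ℕ) (Ω : Set (Fin n → ℝ)) (hΩ : IsOpen Ω)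
    (u : (Fin n → ℝ) → ℝ) (hu : ContDiffOn ℝ (⊤ : ℕ∞) u Ω)
    (hpos : ∀ x ∈ Ω, (Hess u x).PosDef)
    (j k : Fin n) (x : Fin n → ℝ) (hx : x ∈ Ω) :
    -(1/2 : ℝ) * ∑ l, pd k (pd l (fun y => ((Hess u y)⁻¹) j l)) x
      = -(pd k (fun y => ∑ l, ((Hess u y)⁻¹) j l
          * pd l (fun z => Real.log (orbVol u z)) y) x) := by
  have hinv : ∀ l, ContDiffOn ℝ ∞ (fun y => (Hess u y)⁻¹ j l) Ω :=
    ContDiffOn.matrix_inv_apply (hu.hess_apply hΩ) (fun y hy => (hpos y hy).det_pos.ne') j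
  have hdiff : ∀ l, DifferentiableAt ℝ (pd l fun y => (Hess u y)⁻¹ j l) x := fun l =>
    (((hinv l).pd hΩ l).contDiffAt (hΩ.mem_nhds hx)).differentiableAt (by simp)
  have hkey : (fun y => ∑ l, (Hess u y)⁻¹ j l * pd l (fun z => Real.log (orbVol u z)) y)
      =ᶠ[𝓝 x] fun y => (1/2 : ℝ) * ∑ l, pd l (fun z => (Hess u z)⁻¹ j l) y :=
    eventually_of_mem (hΩ.mem_nhds hx) fun y hy =>
      sum_inv_hess_mul_pd_log_orbVol hΩ hu hpos hy j
  rw [hkey.pd_eq, pd_const_mul (DifferentiableAt.fun_sum fun l _ => hdiff l),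
    pd_sum fun l _ => hdiff l]
  ring
end

section
/- Let Δ° = {(x₁,x₂) ∈ ℝ² : x₁ > 0, x₂ > 0, x₁ + x₂ < 1}, let u_G(x₁,x₂) = (1/2)(x₁ log x₁ − x₁ + x₂ log x₂ − x₂ + (1−x₁−x₂) log(1−x₁−x₂) − (1−x₁−x₂)), let f be a smooth real-valued function on an open interval containing (0,1), and set u = u_G + (1/2) f(x₁+x₂) on Δ°. Then: (i) for every (x₁,x₂) ∈ Δ°, det Hess u (x₁,x₂) = (1 + (x₁+x₂)(1−x₁−x₂) f''(x₁+x₂)) / (4 x₁ x₂ (1−x₁−x₂)); and (ii) Hess u is positive definite at every point of Δ° if and only if 1 + t(1−t) f''(t) > 0 for every t ∈ (0,1). -/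
/-!
Writing `s = x₁ + x₂`, the gradient of `u` is `½ (log xⱼ - log (1 - s) + f'(s))ⱼ`, so
`Hess u = ½ (diag (1/x₁, 1/x₂) + (1/(1 - s) + f''(s)) J)` with `J` the all-ones matrix, and the
determinant formula is a direct computation. A symmetric `2 × 2` matrix is positive definite once its
top-left entry and its determinant are positive. Here the determinant has the sign of
`1 + s (1 - s) f''(s)`, and that condition already forces the top-left entry to be positive because
`1/x₁ > 1/s`. Finally, `s` ranges over all of `(0, 1)` as `x` ranges over `Δ°`.
-/

open Real Set Topology Filter Matrix

/-- Guillemin symplectic potential of `ℂP²` on the standard simplex. -/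
noncomputable def uGCP2 : (Fin 2 → ℝ) → ℝ := fun x =>
  (1/2) * (x 0 * Real.log (x 0) - x 0 + x 1 * Real.log (x 1) - x 1
    + (1 - x 0 - x 1) * Real.log (1 - x 0 - x 1) - (1 - x 0 - x 1))

/-- The open standard simplex in `ℝ²`. -/
def simplex2 : Set (Fin 2 → ℝ) := {x | 0 < x 0 ∧ 0 < x 1 ∧ x 0 + x 1 < 1}

noncomputable def potentialCP2 (f : ℝ → ℝ) : (Fin 2 → ℝ) → ℝ :=
  fun y => uGCP2 y + (1/2) * f (y 0 + y 1)

lemma isOpen_simplex2 : IsOpen simplex2 :=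
  (isOpen_lt continuous_const (continuous_apply 0)).inter
    ((isOpen_lt continuous_const (continuous_apply 1)).inter
      (isOpen_lt ((continuous_apply 0).add (continuous_apply 1)) continuous_const))

lemma image_simplex2_add : (fun x : Fin 2 → ℝ => x 0 + x 1) '' simplex2 = Ioo 0 1 := by
  ext t
  constructor
  · rintro ⟨x, ⟨h0, h1, hs⟩, rfl⟩
    exact ⟨by linarith, hs⟩
  · rintro ⟨ht0, ht1⟩
    exact ⟨fun _ => t / 2, ⟨by simp [ht0], by simp [ht0], by simp; linarith⟩, by simp⟩

theorem Matrix.posDef_fin_two_of {a b c : ℝ} (ha : 0 < a) (hdet : 0 < !![a, b; b, c].det) :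
    !![a, b; b, c].PosDef := by
  rw [det_fin_two_of] at hdet
  refine posDef_iff_dotProduct_mulVec.2 ⟨?_, fun v hv => ?_⟩
  · ext i j
    fin_cases i <;> fin_cases j <;> rfl
  · simp only [dotProduct, mulVec, Fin.sum_univ_two, star_trivial, Pi.star_apply, of_apply,
      cons_val', cons_val_zero, cons_val_one, empty_val', cons_val_fin_one]
    refine pos_of_mul_pos_right (?_ : 0 < a * _) ha.le
    have hsq : a * (v 0 * (a * v 0 + b * v 1) + v 1 * (b * v 0 + c * v 1)) =
        (a * v 0 + b * v 1) ^ 2 + (a * c - b * b) * v 1 ^ 2 := by ring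
    rw [hsq]
    rcases eq_or_ne (v 1) 0 with h1 | h1
    · have hv0 : v 0 ≠ 0 := fun hv0 => hv (funext fun i => by fin_cases i <;> assumption)
      simp only [h1, mul_zero, add_zero, zero_pow two_ne_zero]
      positivity
    · positivity

lemma pd_potentialCP2 {f : ℝ → ℝ} {y : Fin 2 → ℝ} (hy : y ∈ simplex2)
    (hf : DifferentiableAt ℝ f (y 0 + y 1)) (j : Fin 2) :
    pd j (potentialCP2 f) y = 1 / 2 * (log (y j) - log (1 - y 0 - y 1) + deriv f (y 0 + y 1)) := by
  obtain ⟨h0, h1, hs⟩ := hy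
  have hz : 1 - y 0 - y 1 ≠ 0 := by linarith
  have hc (i : Fin 2) := hasFDerivAt_apply (𝕜 := ℝ) (F' := fun _ : Fin 2 => ℝ) i y
  have hc' := ((hasFDerivAt_const (1 : ℝ) y).sub (hc 0)).sub (hc 1)
  have hG := (((((((hc 0).mul ((hc 0).log h0.ne')).sub (hc 0)).add
    ((hc 1).mul ((hc 1).log h1.ne'))).sub (hc 1)).add (hc'.mul (hc'.log hz))).sub hc').const_mul
      (1 / 2 : ℝ)
  have hF := (hf.hasDerivAt.comp_hasFDerivAt y ((hc 0).add (hc 1))).const_mul (1 / 2 : ℝ)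
  rw [pd, HasFDerivAt.fderiv (f := potentialCP2 f) (hG.add hF)]
  fin_cases j <;> simp <;> field_simp <;> ring

lemma hess_potentialCP2 {f : ℝ → ℝ} (hf : ContDiffOn ℝ 2 f (Ioo 0 1)) {x : Fin 2 → ℝ}
    (hx : x ∈ simplex2) :
    Hess (potentialCP2 f) x =
      !![((x 0)⁻¹ + (1 - x 0 - x 1)⁻¹ + deriv (deriv f) (x 0 + x 1)) / 2,
          ((1 - x 0 - x 1)⁻¹ + deriv (deriv f) (x 0 + x 1)) / 2;
         ((1 - x 0 - x 1)⁻¹ + deriv (deriv f) (x 0 + x 1)) / 2,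
          ((x 1)⁻¹ + (1 - x 0 - x 1)⁻¹ + deriv (deriv f) (x 0 + x 1)) / 2] := by
  have hsum {y : Fin 2 → ℝ} (hy : y ∈ simplex2) : y 0 + y 1 ∈ Ioo 0 1 :=
    image_simplex2_add ▸ mem_image_of_mem _ hy
  have hf' : ContDiffOn ℝ 1 (deriv f) (Ioo 0 1) := hf.deriv_of_isOpen isOpen_Ioo (by norm_num)
  have hgrad (j : Fin 2) : pd j (potentialCP2 f) =ᶠ[𝓝 x]
      fun y => 1 / 2 * (log (y j) - log (1 - y 0 - y 1) + deriv f (y 0 + y 1)) := by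
    filter_upwards [isOpen_simplex2.mem_nhds hx] with y hy
    exact pd_potentialCP2 hy
      ((hf.contDiffAt (isOpen_Ioo.mem_nhds (hsum hy))).differentiableAt two_ne_zero) j
  obtain ⟨h0, h1, hs⟩ := hx
  have hz : 1 - x 0 - x 1 ≠ 0 := by linarith
  have hc (i : Fin 2) := hasFDerivAt_apply (𝕜 := ℝ) (F' := fun _ : Fin 2 => ℝ) i x
  have hc' := ((hasFDerivAt_const (1 : ℝ) x).sub (hc 0)).sub (hc 1)
  have hb := ((hf'.contDiffAt (isOpen_Ioo.mem_nhds (hsum ⟨h0, h1, hs⟩))).differentiableAt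
    one_ne_zero).hasDerivAt
  ext i j
  have hxj : x j ≠ 0 := by fin_cases j <;> simp [h0.ne', h1.ne']
  have hG := ((((hc j).log hxj).sub (hc'.log hz)).add
    (hb.comp_hasFDerivAt x ((hc 0).add (hc 1)))).const_mul (1 / 2 : ℝ)
  simp only [Hess, of_apply]
  rw [pd, (hgrad j).fderiv_eq, HasFDerivAt.fderiv (f := fun y : Fin 2 → ℝ =>
      1 / 2 * (log (y j) - log (1 - y 0 - y 1) + deriv f (y 0 + y 1))) hG]
  fin_cases i <;> fin_cases j <;> simp <;> ring

lemma det_hess_potentialCP2 {f : ℝ → ℝ} (hf : ContDiffOn ℝ 2 f (Ioo 0 1)) {x : Fin 2 → ℝ}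
    (hx : x ∈ simplex2) :
    (Hess (potentialCP2 f) x).det =
      (1 + (x 0 + x 1) * (1 - x 0 - x 1) * deriv (deriv f) (x 0 + x 1)) /
        (4 * x 0 * x 1 * (1 - x 0 - x 1)) := by
  obtain ⟨h0, h1, hs⟩ := hx
  have hz : 1 - x 0 - x 1 ≠ 0 := by linarith
  rw [hess_potentialCP2 hf ⟨h0, h1, hs⟩, det_fin_two_of]
  field_simp
  ring

lemma posDef_hess_potentialCP2_iff {f : ℝ → ℝ} (hf : ContDiffOn ℝ 2 f (Ioo 0 1))
    {x : Fin 2 → ℝ} (hx : x ∈ simplex2) :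
    (Hess (potentialCP2 f) x).PosDef ↔
      0 < 1 + (x 0 + x 1) * (1 - (x 0 + x 1)) * deriv (deriv f) (x 0 + x 1) := by
  have hdet := det_hess_potentialCP2 hf hx
  obtain ⟨h0, h1, hs⟩ := hx
  have hz : 0 < 1 - x 0 - x 1 := by linarith
  have hden : 0 < 4 * x 0 * x 1 * (1 - x 0 - x 1) := by positivity
  rw [sub_add_eq_sub_sub]
  refine ⟨fun hpd => ?_, fun hcond => ?_⟩
  · have := hpd.det_pos
    rwa [hdet, div_pos_iff_of_pos_right hden] at this
  · rw [hess_potentialCP2 hf ⟨h0, h1, hs⟩] at hdet ⊢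
    refine posDef_fin_two_of ?_ (hdet ▸ div_pos hcond hden)
    have hlt : (x 0 + x 1)⁻¹ < (x 0)⁻¹ := inv_strictAnti₀ h0 (by linarith)
    have hcond' : 0 < (x 0 + x 1)⁻¹ + (1 - x 0 - x 1)⁻¹ + deriv (deriv f) (x 0 + x 1) := by
      have e : (x 0 + x 1)⁻¹ + (1 - x 0 - x 1)⁻¹ + deriv (deriv f) (x 0 + x 1) =
          (1 + (x 0 + x 1) * (1 - x 0 - x 1) * deriv (deriv f) (x 0 + x 1)) /
            ((x 0 + x 1) * (1 - x 0 - x 1)) := by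
        field_simp
        ring
      rw [e]
      positivity
    linarith

theorem stmt10_general (f : ℝ → ℝ) (I : Set ℝ) (hI1 : Ioo (0:ℝ) 1 ⊆ I)
    (hf : ContDiffOn ℝ (⊤ : ℕ∞) f I) :
    (∀ x ∈ simplex2,
      (Hess (fun y => uGCP2 y + (1/2) * f (y 0 + y 1)) x).det =
        (1 + (x 0 + x 1) * (1 - x 0 - x 1) * deriv (deriv f) (x 0 + x 1)) /
          (4 * x 0 * x 1 * (1 - x 0 - x 1))) ∧
    ((∀ x ∈ simplex2, (Hess (fun y => uGCP2 y + (1/2) * f (y 0 + y 1)) x).PosDef) ↔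
      ∀ t ∈ Ioo (0:ℝ) 1, 0 < 1 + t * (1 - t) * deriv (deriv f) t) := by
  have hf2 : ContDiffOn ℝ 2 f (Ioo 0 1) := (hf.mono hI1).of_le (WithTop.coe_le_coe.2 le_top)
  refine ⟨fun x hx => det_hess_potentialCP2 hf2 hx, ?_⟩
  rw [← image_simplex2_add, forall_mem_image]
  exact forall₂_congr fun x hx => posDef_hess_potentialCP2_iff hf2 hx

theorem stmt10 (f : ℝ → ℝ) (I : Set ℝ) (hI : IsOpen I) (hI1 : Ioo (0:ℝ) 1 ⊆ I)
    (hf : ContDiffOn ℝ (⊤ : ℕ∞) f I) :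
    (∀ x ∈ simplex2,
      (Hess (fun y => uGCP2 y + (1/2) * f (y 0 + y 1)) x).det =
        (1 + (x 0 + x 1) * (1 - x 0 - x 1) * deriv (deriv f) (x 0 + x 1)) /
          (4 * x 0 * x 1 * (1 - x 0 - x 1))) ∧
    ((∀ x ∈ simplex2, (Hess (fun y => uGCP2 y + (1/2) * f (y 0 + y 1)) x).PosDef) ↔
      ∀ t ∈ Ioo (0:ℝ) 1, 0 < 1 + t * (1 - t) * deriv (deriv f) t) :=
  stmt10_general f I hI1 hf
end

section
/- Let ν₁, …, ν_d ∈ ℝ² span ℝ², let λ₁, …, λ_d ∈ ℝ, set l_i(x) = ⟨x, ν_i⟩ − λ_i, and let Ω = {x ∈ ℝ² : l_i(x) > 0 for all i} be nonempty. Define u_G = (1/2) ∑_{i=1}^d ( l_i log l_i − l_i ) on Ω. Then for every x ∈ Ω the Hessian Hess u_G (x) = (1/2) ∑_{i=1}^d ν_i ν_iᵀ / l_i(x) is positive definite, and x is a critical point of det Hess u_G if and only if ∑_{i,j=1}^d ( det(ν_i, ν_j) )² / ( l_i(x)² l_j(x) ) · ν_i = 0 in ℝ², where det(ν_i, ν_j)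 denotes the determinant of the 2×2 matrix with columns ν_i and ν_j. -/
/-
On `Ω`, `Hess u_G = ½ ∑ ν_i ν_iᵀ / l_i = ½ Nᵀ diag(1/l) N`, where `N` has rows `ν_i`; this is
positive definite because the `ν_i` span, i.e. `N` is injective. In dimension two the
Cauchy–Binet expansion gives `det Hess u_G = (1/8) ∑_{i,j} det(ν_i, ν_j)² / (l_i l_j)`.
Differentiating and using the symmetry in `(i, j)`, the differential of `det Hess u_G` at `x` is
`v ↦ -(1/4) ⟨W, v⟩`, with `W` the vector of the statement, so it vanishes exactly when `W = 0`.
-/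

open Real Set Topology Filter Matrix

/-- The affine functions `l_i(x) = ⟨x, ν_i⟩ - λ_i` defining the polytope. -/
noncomputable def ellFn {n d : ℕ} (ν : Fin d → Fin n → ℝ) (lam : Fin d → ℝ)
    (i : Fin d) (x : Fin n → ℝ) : ℝ :=
  (∑ j, x j * ν i j) - lam i

/-- The Guillemin potential `u_G = (1/2) ∑ (l_i log l_i - l_i)`. -/
noncomputable def guillemin {n d : ℕ} (ν : Fin d → Fin n → ℝ) (lam : Fin d → ℝ)
    (x : Fin n → ℝ) : ℝ :=
  (1/2) * ∑ i, (ellFn ν lam i x * Real.log (ellFn ν lam i x) - ellFn ν lam i x)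

/-- The polytope `P = {x : l_i(x) ≥ 0 for all i}`. -/
def polyP {n d : ℕ} (ν : Fin d → Fin n → ℝ) (lam : Fin d → ℝ) : Set (Fin n → ℝ) :=
  {x | ∀ i, 0 ≤ ellFn ν lam i x}

/-- The "interior" `{x : l_i(x) > 0 for all i}` of the polytope. -/
def polyInt {n d : ℕ} (ν : Fin d → Fin n → ℝ) (lam : Fin d → ℝ) : Set (Fin n → ℝ) :=
  {x | ∀ i, 0 < ellFn ν lam i x}

open Finset

noncomputable def dotCLM {ι : Type*} [Fintype ι] : (ι → ℝ) →ₗ[ℝ] (ι → ℝ) →L[ℝ] ℝ :=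
  LinearMap.toContinuousLinearMap.toLinearMap ∘ₗ dotProductBilin ℝ ℝ

@[simp]
lemma dotCLM_apply {ι : Type*} [Fintype ι] (w v : ι → ℝ) : dotCLM w v = w ⬝ᵥ v := rfl

lemma dotCLM_injective {ι : Type*} [Fintype ι] :
    Function.Injective (dotCLM : (ι → ℝ) →ₗ[ℝ] (ι → ℝ) →L[ℝ] ℝ) :=
  (injective_iff_map_eq_zero _).2 fun w hw =>
    dotProduct_eq_zero_iff.1 fun v => by simpa using congr($hw v)

lemma injective_mulVec_of_span_eq_top {ι κ : Type*} [Fintype κ] {ν : ι → κ → ℝ}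
    (hspan : Submodule.span ℝ (Set.range ν) = ⊤) : Function.Injective (Matrix.of ν).mulVec := by
  rw [← Matrix.coe_mulVecLin, ← LinearMap.ker_eq_bot, Matrix.ker_mulVecLin_eq_bot_iff]
  intro v hv
  have : dotProductBilin ℝ ℝ v = 0 :=
    LinearMap.ext_on_range hspan fun i => (dotProduct_comm v (ν i)).trans (congr_fun hv i)
  exact dotProduct_eq_zero_iff.1 fun w => congr($this w)

lemma posDef_of_span_eq_top {ι κ : Type*} [Fintype ι] [DecidableEq ι] [Fintype κ]
    {ν : ι → κ → ℝ} (hspan : Submodule.span ℝ (Set.range ν) = ⊤) {c : ℝ} (hc : 0 < c)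
    {l : ι → ℝ} (hl : ∀ i, 0 < l i) :
    (Matrix.of fun p q => c * ∑ i, ν i p * ν i q / l i).PosDef := by
  have hfactor : (Matrix.of fun p q => c * ∑ i, ν i p * ν i q / l i) =
      c • ((Matrix.of ν)ᴴ * Matrix.diagonal (fun i => (l i)⁻¹) * Matrix.of ν) := by
    ext p q
    rw [Matrix.smul_apply, Matrix.mul_apply]
    simp [Matrix.mul_diagonal, mul_sum, div_eq_mul_inv, mul_right_comm]
  rw [hfactor]
  exact ((Matrix.PosDef.diagonal fun i => inv_pos.2 (hl i)).conjTranspose_mul_mul_same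
    (injective_mulVec_of_span_eq_top hspan)).smul hc

lemma det_fin_two_of_sum_div {ι : Type*} [Fintype ι] (c : ℝ) (v : ι → Fin 2 → ℝ) (l : ι → ℝ) :
    (Matrix.of fun p q => c * ∑ i, v i p * v i q / l i).det =
      c ^ 2 / 2 * ∑ i, ∑ j, (Matrix.det !![v i 0, v j 0; v i 1, v j 1]) ^ 2 / (l i * l j) := by
  have expand : ∀ i j, (Matrix.det !![v i 0, v j 0; v i 1, v j 1]) ^ 2 / (l i * l j) =
      v i 0 * v i 0 / l i * (v j 1 * v j 1 / l j) + v j 0 * v j 0 / l j * (v i 1 * v i 1 / l i)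
        - 2 * (v i 0 * v i 1 / l i * (v j 1 * v j 0 / l j)) := fun i j => by
    rw [Matrix.det_fin_two_of]
    ring
  rw [Matrix.det_fin_two]
  simp only [Matrix.of_apply, expand, sum_sub_distrib, sum_add_distrib]
  rw [sum_comm (f := fun i j => v j 0 * v j 0 / l j * (v i 1 * v i 1 / l i))]
  simp only [← sum_mul, ← mul_sum]
  ring

lemma pd_eq_of_hasFDerivAt {n : ℕ} {f : (Fin n → ℝ) → ℝ} {f' : (Fin n → ℝ) →L[ℝ] ℝ}
    {x : Fin n → ℝ} (hf : HasFDerivAt f f' x) (i : Fin n) : pd i f x = f' (Pi.single i 1) := by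
  rw [pd, hf.fderiv]

lemma hasFDerivAt_sum_div_mul {ι E : Type*} [Fintype ι] [NormedAddCommGroup E] [NormedSpace ℝ E]
    {l : ι → E → ℝ} {L : ι → E →L[ℝ] ℝ} {x : E} (hl : ∀ i, HasFDerivAt (l i) (L i) x)
    (hl0 : ∀ i, l i x ≠ 0) {c : ι → ι → ℝ} (hc : ∀ i j, c i j = c j i) :
    HasFDerivAt (fun y => ∑ i, ∑ j, c i j / (l i y * l j y))
      ((-2 : ℝ) • ∑ i, ∑ j, (c i j / (l i x ^ 2 * l j x)) • L i) x := by
  have hterm : ∀ i j, HasFDerivAt (fun y => c i j / (l i y * l j y))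
      (-((c i j / (l i x ^ 2 * l j x)) • L i + (c i j / (l i x * l j x ^ 2)) • L j)) x := by
    intro i j
    have h := ((hasDerivAt_inv (mul_ne_zero (hl0 i) (hl0 j))).comp_hasFDerivAt x
      ((hl i).mul (hl j))).const_mul (c i j)
    simp only [div_eq_mul_inv] at h ⊢
    refine h.congr_fderiv ?_
    ext v
    simp
    field_simp
  have hswap : ∑ i, ∑ j, (c i j / (l i x * l j x ^ 2)) • L j =
      ∑ i, ∑ j, (c i j / (l i x ^ 2 * l j x)) • L i := by
    rw [sum_comm]
    exact sum_congr rfl fun i _ => sum_congr rfl fun j _ => by rw [hc, mul_comm]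
  refine (HasFDerivAt.fun_sum fun i _ => HasFDerivAt.fun_sum fun j _ => hterm i j).congr_fderiv ?_
  simp only [sum_neg_distrib, sum_add_distrib, hswap]
  module

section Guillemin

variable {n d : ℕ} (ν : Fin d → Fin n → ℝ) (lam : Fin d → ℝ)

lemma hasFDerivAt_ellFn (i : Fin d) (x : Fin n → ℝ) :
    HasFDerivAt (ellFn ν lam i) (dotCLM (ν i)) x := by
  have : ellFn ν lam i = fun y => dotCLM (ν i) y - lam i := by
    ext y; simp [ellFn, dotProduct, mul_comm]
  exact this ▸ (dotCLM (ν i)).hasFDerivAt.sub_const _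

lemma isOpen_polyInt : IsOpen (polyInt ν lam) := by
  simp only [polyInt, Set.ofPred_forall]
  exact isOpen_iInter_of_finite fun i => isOpen_lt continuous_const <|
    continuous_iff_continuousAt.2 fun x => (hasFDerivAt_ellFn ν lam i x).continuousAt

lemma hasFDerivAt_guillemin {y : Fin n → ℝ} (hy : y ∈ polyInt ν lam) :
    HasFDerivAt (guillemin ν lam)
      ((1/2 : ℝ) • ∑ i, Real.log (ellFn ν lam i y) • dotCLM (ν i)) y := by
  refine (HasFDerivAt.fun_sum fun i _ => ?_).const_mul (1/2 : ℝ)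
  have h : HasDerivAt (fun t => t * Real.log t - t) (Real.log (ellFn ν lam i y))
      (ellFn ν lam i y) := by
    simpa using (hasDerivAt_mul_log (hy i).ne').fun_sub (hasDerivAt_id _)
  exact h.comp_hasFDerivAt y (hasFDerivAt_ellFn ν lam i y)

lemma pd_guillemin_eqOn (q : Fin n) :
    Set.EqOn (pd q (guillemin ν lam))
      (fun y => (1/2 : ℝ) * ∑ i, Real.log (ellFn ν lam i y) * ν i q) (polyInt ν lam) :=
  fun y hy => by simp [pd_eq_of_hasFDerivAt (hasFDerivAt_guillemin ν lam hy)]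

lemma hasFDerivAt_pd_guillemin (q : Fin n) {y : Fin n → ℝ} (hy : y ∈ polyInt ν lam) :
    HasFDerivAt (pd q (guillemin ν lam))
      ((1/2 : ℝ) • ∑ i, (ν i q / ellFn ν lam i y) • dotCLM (ν i)) y := by
  refine HasFDerivAt.congr_of_eventuallyEq ?_
    (eventuallyEq_of_mem ((isOpen_polyInt ν lam).mem_nhds hy) (pd_guillemin_eqOn ν lam q))
  refine (HasFDerivAt.fun_sum fun i _ => ?_).const_mul (1/2 : ℝ)
  have h := ((hasFDerivAt_ellFn ν lam i y).log (hy i).ne').mul_const (ν i q)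
  simpa [smul_smul, div_eq_mul_inv] using h

theorem hess_guillemin {y : Fin n → ℝ} (hy : y ∈ polyInt ν lam) :
    Hess (guillemin ν lam) y =
      Matrix.of (fun p q => (1/2 : ℝ) * ∑ i, ν i p * ν i q / ellFn ν lam i y) := by
  ext p q
  simp only [Hess, of_apply, pd_eq_of_hasFDerivAt (hasFDerivAt_pd_guillemin ν lam q hy)]
  simp [mul_comm, mul_div_assoc]

end Guillemin

lemma hasFDerivAt_det_hess_guillemin {d : ℕ} (ν : Fin d → Fin 2 → ℝ) (lam : Fin d → ℝ)
    {x : Fin 2 → ℝ} (hx : x ∈ polyInt ν lam) :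
    HasFDerivAt (fun y => (Hess (guillemin ν lam) y).det)
      ((-(1/4) : ℝ) • dotCLM (∑ i, ∑ j, ((Matrix.det !![ν i 0, ν j 0; ν i 1, ν j 1]) ^ 2 /
        ((ellFn ν lam i x) ^ 2 * ellFn ν lam j x)) • ν i)) x := by
  have hsymm : ∀ i j, (Matrix.det !![ν i 0, ν j 0; ν i 1, ν j 1]) ^ 2 =
      (Matrix.det !![ν j 0, ν i 0; ν j 1, ν i 1]) ^ 2 := fun i j => by
    simp only [Matrix.det_fin_two_of]
    ring
  have h := (hasFDerivAt_sum_div_mul (hasFDerivAt_ellFn ν lam · x) (fun i => (hx i).ne')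
    hsymm).const_mul (1/8 : ℝ)
  refine (h.congr_of_eventuallyEq ?_).congr_fderiv ?_
  · filter_upwards [(isOpen_polyInt ν lam).mem_nhds hx] with y hy
    rw [hess_guillemin ν lam hy, det_fin_two_of_sum_div]
    norm_num
  · simp only [map_sum, map_smul]
    module

theorem stmt19_general (d : ℕ) (ν : Fin d → Fin 2 → ℝ) (lam : Fin d → ℝ)
    (hspan : Submodule.span ℝ (Set.range ν) = ⊤)
    (x : Fin 2 → ℝ) (hx : x ∈ polyInt ν lam) :
    Hess (guillemin ν lam) x =
      Matrix.of (fun p q => (1/2 : ℝ) * ∑ i, ν i p * ν i q / ellFn ν lam i x) ∧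
    (Hess (guillemin ν lam) x).PosDef ∧
    (fderiv ℝ (fun y => (Hess (guillemin ν lam) y).det) x = 0 ↔
      ∑ i, ∑ j, (((Matrix.det !![ν i 0, ν j 0; ν i 1, ν j 1])^2 /
        ((ellFn ν lam i x)^2 * ellFn ν lam j x)) • ν i) = (0 : Fin 2 → ℝ)) := by
  refine ⟨hess_guillemin ν lam hx, ?_, ?_⟩
  · rw [hess_guillemin ν lam hx]
    exact posDef_of_span_eq_top hspan one_half_pos hx
  · rw [(hasFDerivAt_det_hess_guillemin ν lam hx).fderiv, smul_eq_zero,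
      map_eq_zero_iff _ dotCLM_injective]
    norm_num

theorem stmt19 (d : ℕ) (ν : Fin d → Fin 2 → ℝ) (lam : Fin d → ℝ)
    (hspan : Submodule.span ℝ (Set.range ν) = ⊤)
    (hne : (polyInt ν lam).Nonempty)
    (x : Fin 2 → ℝ) (hx : x ∈ polyInt ν lam) :
    Hess (guillemin ν lam) x =
      Matrix.of (fun p q => (1/2 : ℝ) * ∑ i, ν i p * ν i q / ellFn ν lam i x) ∧
    (Hess (guillemin ν lam) x).PosDef ∧
    (fderiv ℝ (fun y => (Hess (guillemin ν lam) y).det) x = 0 ↔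
      ∑ i, ∑ j, (((Matrix.det !![ν i 0, ν j 0; ν i 1, ν j 1])^2 /
        ((ellFn ν lam i x)^2 * ellFn ν lam j x)) • ν i) = (0 : Fin 2 → ℝ)) :=
  stmt19_general d ν lam hspan x hx
end
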